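/- arXiv:1907.03796 — 4 statements merged into one kernel-verified Lean document; each statement's English description precedes it below -/
import Mathlib

section
/- Let q > 0, a > 0, T > 0, and let g : [0, T) → ℝ be a differentiable function with 0 ≤ g(t) < 1, g(t) → 1 as t → T⁻, and g'(t) ≤ ((qa+1)/a)(1 - g(t))^{-2q-1} for all t ∈ [0, T). Then for all t ∈ [0, T), g(t) ≥ 1 - C₂(T - t)^{1/(2q+2)} where C₂ = ((qa+1)(2q+2)/a)^{1/(2q+2)}. -/
/-!
With `u = 1 - g` and `p = 2q + 2`, the differential inequality says `-u' ≤ K u^(1-p)` with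
`K = (qa+1)/a`, i.e. `(u^p)' ≥ -pK`. Hence `u^p + pK t` is nondecreasing on `[0, T)`, and letting
`t → T⁻`, where `u → 0`, gives `u(t)^p ≤ pK (T - t)`; taking `p`-th roots is the claim.
-/

open Set Filter Topology

theorem MonotoneOn.le_of_tendsto_nhdsLT {f : ℝ → ℝ} {a b L t : ℝ}
    (hf : MonotoneOn f (Ico a b)) (hlim : Tendsto f (𝓝[<] b) (𝓝 L)) (ht : t ∈ Ico a b) :
    f t ≤ L :=
  ge_of_tendsto hlim <| by
    filter_upwards [Ioo_mem_nhdsLT ht.2] with s hs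
    exact hf ht ⟨ht.1.trans hs.1.le, hs.2⟩ hs.1.le

theorem monotoneOn_of_hasDerivWithinAt_nonneg' {s : Set ℝ} (hs : Convex ℝ s) {f f' : ℝ → ℝ}
    (hf : ∀ x ∈ s, HasDerivWithinAt f (f' x) s x) (hf' : ∀ x ∈ s, 0 ≤ f' x) :
    MonotoneOn f s :=
  monotoneOn_of_hasDerivWithinAt_nonneg hs (fun x hx ↦ (hf x hx).continuousWithinAt)
    (fun x hx ↦ (hf x (interior_subset hx)).mono interior_subset)
    (fun x hx ↦ hf' x (interior_subset hx))

theorem monotoneOn_rpow_add_mul_of_neg_deriv_le {s : Set ℝ} (hs : Convex ℝ s)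
    {u u' : ℝ → ℝ} {p K : ℝ} (hp : 0 ≤ p)
    (hu : ∀ t ∈ s, HasDerivWithinAt u (u' t) s t) (hpos : ∀ t ∈ s, 0 < u t)
    (hineq : ∀ t ∈ s, -u' t ≤ K * u t ^ (1 - p)) :
    MonotoneOn (fun t ↦ u t ^ p + t * (p * K)) s := by
  refine monotoneOn_of_hasDerivWithinAt_nonneg' hs
    (f' := fun t ↦ u' t * p * u t ^ (p - 1) + p * K) (fun t ht ↦ ?_) (fun t ht ↦ ?_)
  · exact ((hu t ht).rpow_const (Or.inl (hpos t ht).ne')).add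
      (hasDerivAt_mul_const (p * K)).hasDerivWithinAt
  · have hcancel : u t ^ (p - 1) * u t ^ (1 - p) = 1 := by
      rw [← Real.rpow_add (hpos t ht)]; norm_num
    have hmul := mul_le_mul_of_nonneg_left (hineq t ht)
      (mul_nonneg hp (Real.rpow_nonneg (hpos t ht).le (p - 1)))
    have hrhs : p * u t ^ (p - 1) * (K * u t ^ (1 - p)) = p * K := by
      linear_combination p * K * hcancel
    linarith

theorem rpow_le_of_neg_deriv_le_of_tendsto_zero {u u' : ℝ → ℝ} {a b p K : ℝ}
    (hp : 0 < p) (hK : 0 ≤ K)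
    (hu : ∀ t ∈ Ico a b, HasDerivWithinAt u (u' t) (Ico a b) t)
    (hpos : ∀ t ∈ Ico a b, 0 < u t) (hlim : Tendsto u (𝓝[<] b) (𝓝 0))
    (hineq : ∀ t ∈ Ico a b, -u' t ≤ K * u t ^ (1 - p)) {t : ℝ} (ht : t ∈ Ico a b) :
    u t ≤ (p * K) ^ (1 / p) * (b - t) ^ (1 / p) := by
  have hbarrier_lim : Tendsto (fun t ↦ u t ^ p + t * (p * K)) (𝓝[<] b) (𝓝 (b * (p * K))) := by
    have hpow : Tendsto (fun t ↦ u t ^ p) (𝓝[<] b) (𝓝 0) := by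
      simpa [Function.comp_def, Real.zero_rpow hp.ne'] using
        ((Real.continuousAt_rpow_const 0 p (Or.inr hp.le)).tendsto.comp hlim)
    simpa using hpow.add ((continuous_id.mul continuous_const).tendsto b |>.mono_left
      nhdsWithin_le_nhds)
  have hbound := (monotoneOn_rpow_add_mul_of_neg_deriv_le (convex_Ico a b) hp.le hu hpos
    hineq).le_of_tendsto_nhdsLT hbarrier_lim ht
  rw [← Real.mul_rpow (by positivity) (by linarith [ht.2]), one_div,
    Real.le_rpow_inv_iff_of_pos (hpos t ht).le
    (mul_nonneg (mul_nonneg hp.le hK) (sub_nonneg.2 ht.2.le)) hp]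
  linarith

theorem stmt_1_general (q a T : ℝ) (hq : 0 < q) (ha : 0 < a)
    (g g' : ℝ → ℝ)
    (hderiv : ∀ t ∈ Set.Ico (0:ℝ) T, HasDerivWithinAt g (g' t) (Set.Ico (0:ℝ) T) t)
    (hrange : ∀ t ∈ Set.Ico (0:ℝ) T, 0 ≤ g t ∧ g t < 1)
    (hlim : Filter.Tendsto g (nhdsWithin T (Set.Iio T)) (nhds 1))
    (hineq : ∀ t ∈ Set.Ico (0:ℝ) T, g' t ≤ ((q * a + 1) / a) * (1 - g t) ^ (-(2 * q) - 1)) :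
    ∀ t ∈ Set.Ico (0:ℝ) T,
      g t ≥ 1 - ((q * a + 1) * (2 * q + 2) / a) ^ (1 / (2 * q + 2)) * (T - t) ^ (1 / (2 * q + 2)) := by
  intro t ht
  have hrate := rpow_le_of_neg_deriv_le_of_tendsto_zero
    (u := fun t ↦ 1 - g t) (u' := fun t ↦ -g' t) (p := 2 * q + 2)
    (K := (q * a + 1) / a) (by linarith) (by positivity)
    (fun t ht ↦ (hderiv t ht).const_sub 1) (fun t ht ↦ sub_pos.2 (hrange t ht).2)
    (by simpa using (tendsto_const_nhds (x := (1 : ℝ))).sub hlim)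
    (fun t ht ↦ by convert hineq t ht using 3 <;> ring) ht
  rw [mul_div_assoc', mul_comm (2 * q + 2)] at hrate
  linarith

/-- Integration step in the quenching rate lower bound (Theorem 3.2). -/
theorem stmt_1 (q a T : ℝ) (hq : 0 < q) (ha : 0 < a) (hT : 0 < T)
    (g g' : ℝ → ℝ)
    (hderiv : ∀ t ∈ Set.Ico (0:ℝ) T, HasDerivWithinAt g (g' t) (Set.Ico (0:ℝ) T) t)
    (hrange : ∀ t ∈ Set.Ico (0:ℝ) T, 0 ≤ g t ∧ g t < 1)
    (hlim : Filter.Tendsto g (nhdsWithin T (Set.Iio T)) (nhds 1))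
    (hineq : ∀ t ∈ Set.Ico (0:ℝ) T, g' t ≤ ((q * a + 1) / a) * (1 - g t) ^ (-(2 * q) - 1)) :
    ∀ t ∈ Set.Ico (0:ℝ) T,
      g t ≥ 1 - ((q * a + 1) * (2 * q + 2) / a) ^ (1 / (2 * q + 2)) * (T - t) ^ (1 / (2 * q + 2)) :=
  stmt_1_general q a T hq ha g g' hderiv hrange hlim hineq
end

section
/- Let q > 0, a > 0, u₀ : [0, a] → ℝ with 0 ≤ u₀(a) < 1, and suppose a differentiable function g : [0, T) → ℝ with g(0) = u₀(a), 0 ≤ g < 1, g(t) → 1 as t → T⁻, satisfies g'(t) ≤ ((qa+1)/a)(1 - g(t))^{-2q-1}. Then T ≥ a(1 - u₀(a))^{2q+2} / (2(qa+1)(q+1)). -/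
/-!
With `p = 2q + 1` and `K = (qa + 1)/a`, the hypothesis says `g' ≤ K (1 - g)^(-p)`, so
`(1 - g)^(p+1)` decreases at rate at most `(p + 1) K`. Starting from `(1 - u₀(a))^(p+1)` at
`t = 0`, it cannot reach `0` (quenching) before time `(1 - u₀(a))^(p+1) / ((p + 1) K)`.
-/

open Set Filter Topology

theorem Convex.mul_sub_le_image_sub_of_le_hasDerivWithinAt {D : Set ℝ}
    (hD : Convex ℝ D) {f f' : ℝ → ℝ} (hf : ∀ x ∈ D, HasDerivWithinAt f (f' x) D x) {C : ℝ}
    (hC : ∀ x ∈ interior D, C ≤ f' x) {x y : ℝ} (hx : x ∈ D) (hy : y ∈ D) (hxy : x ≤ y) :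
    C * (y - x) ≤ f y - f x := by
  have hderiv : ∀ z ∈ interior D, HasDerivAt f (f' z) z := fun z hz =>
    (hf z (interior_subset hz)).hasDerivAt (mem_interior_iff_mem_nhds.mp hz)
  refine hD.mul_sub_le_image_sub_of_le_deriv (fun z hz => (hf z hz).continuousWithinAt)
    (fun z hz => (hderiv z hz).differentiableAt.differentiableWithinAt) (fun z hz => ?_)
    x hx y hy hxy
  rw [(hderiv z hz).deriv]
  exact hC z hz

theorem Convex.one_sub_rpow_sub_le_of_hasDerivWithinAt_le {D : Set ℝ} (hD : Convex ℝ D)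
    {g g' : ℝ → ℝ} {K p : ℝ} (hp : -1 ≤ p)
    (hderiv : ∀ t ∈ D, HasDerivWithinAt g (g' t) D t) (hlt : ∀ t ∈ D, g t < 1)
    (hineq : ∀ t ∈ D, g' t ≤ K * (1 - g t) ^ (-p)) {x y : ℝ} (hx : x ∈ D) (hy : y ∈ D)
    (hxy : x ≤ y) :
    (1 - g x) ^ (p + 1) - (p + 1) * K * (y - x) ≤ (1 - g y) ^ (p + 1) := by
  have hpos : ∀ t ∈ D, 0 < 1 - g t := fun t ht => sub_pos.mpr (hlt t ht)
  have hderiv_pow : ∀ t ∈ D, HasDerivWithinAt (fun t => (1 - g t) ^ (p + 1))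
      (-(g' t * (p + 1) * (1 - g t) ^ p)) D t := by
    intro t ht
    simpa using ((hderiv t ht).const_sub 1).rpow_const (p := p + 1) (Or.inl (hpos t ht).ne')
  have hrate : ∀ t ∈ D, -((p + 1) * K) ≤ -(g' t * (p + 1) * (1 - g t) ^ p) := by
    intro t ht
    have hdecay : (1 - g t) ^ p * g' t ≤ K := calc
      (1 - g t) ^ p * g' t ≤ (1 - g t) ^ p * (K * (1 - g t) ^ (-p)) :=
        mul_le_mul_of_nonneg_left (hineq t ht) (Real.rpow_nonneg (hpos t ht).le p)
      _ = K := by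
        rw [Real.rpow_neg (hpos t ht).le]
        field_simp [(Real.rpow_pos_of_pos (hpos t ht) p).ne']
    linarith [mul_le_mul_of_nonneg_left hdecay (show 0 ≤ p + 1 by linarith)]
  linarith [hD.mul_sub_le_image_sub_of_le_hasDerivWithinAt hderiv_pow
    (fun t ht => hrate t (interior_subset ht)) hx hy hxy]

theorem one_sub_rpow_le_of_hasDerivWithinAt_le_of_tendsto_one {g g' : ℝ → ℝ} {T K p : ℝ}
    (hp : -1 < p) (hT : 0 < T)
    (hderiv : ∀ t ∈ Ico 0 T, HasDerivWithinAt g (g' t) (Ico 0 T) t)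
    (hlt : ∀ t ∈ Ico 0 T, g t < 1) (hlim : Tendsto g (𝓝[<] T) (𝓝 1))
    (hineq : ∀ t ∈ Ico 0 T, g' t ≤ K * (1 - g t) ^ (-p)) :
    (1 - g 0) ^ (p + 1) ≤ (p + 1) * K * T := by
  have hbound :
      ∀ᶠ t in 𝓝[<] T, (1 - g 0) ^ (p + 1) - (p + 1) * K * t ≤ (1 - g t) ^ (p + 1) := by
    filter_upwards [self_mem_nhdsWithin, Ioo_mem_nhdsLT hT] with t htT ht0
    simpa using (convex_Ico 0 T).one_sub_rpow_sub_le_of_hasDerivWithinAt_le hp.le hderiv hlt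
      hineq (left_mem_Ico.mpr hT) ⟨ht0.1.le, htT⟩ ht0.1.le
  have hquench : Tendsto (fun t => (1 - g t) ^ (p + 1)) (𝓝[<] T) (𝓝 0) := by
    have h := ((Real.continuousAt_rpow_const 0 (p + 1) (Or.inr (by linarith))).tendsto.comp
      (by simpa using hlim.const_sub 1 : Tendsto (fun t => 1 - g t) (𝓝[<] T) (𝓝 0)))
    rwa [Real.zero_rpow (by linarith)] at h
  have hlinear : Tendsto (fun t => (1 - g 0) ^ (p + 1) - (p + 1) * K * t) (𝓝[<] T)
      (𝓝 ((1 - g 0) ^ (p + 1) - (p + 1) * K * T)) :=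
    (tendsto_nhdsWithin_of_tendsto_nhds (tendsto_id.const_mul _)).const_sub _
  linarith [le_of_tendsto_of_tendsto hlinear hquench hbound]

theorem stmt_4_general (q a T : ℝ) (hq : 0 < q) (ha : 0 < a) (hT : 0 < T)
    (u₀ : ℝ → ℝ)
    (g g' : ℝ → ℝ) (hg0 : g 0 = u₀ a)
    (hderiv : ∀ t ∈ Set.Ico (0:ℝ) T, HasDerivWithinAt g (g' t) (Set.Ico (0:ℝ) T) t)
    (hrange : ∀ t ∈ Set.Ico (0:ℝ) T, 0 ≤ g t ∧ g t < 1)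
    (hlim : Filter.Tendsto g (nhdsWithin T (Set.Iio T)) (nhds 1))
    (hineq : ∀ t ∈ Set.Ico (0:ℝ) T, g' t ≤ ((q * a + 1) / a) * (1 - g t) ^ (-(2 * q) - 1)) :
    a * (1 - u₀ a) ^ (2 * q + 2) / (2 * (q * a + 1) * (q + 1)) ≤ T := by
  have hbound := one_sub_rpow_le_of_hasDerivWithinAt_le_of_tendsto_one (p := 2 * q + 1)
    (by linarith) hT hderiv (fun t ht => (hrange t ht).2) hlim
    (fun t ht => by rw [neg_add']; exact hineq t ht)
  rw [hg0, show 2 * q + 1 + 1 = 2 * q + 2 by ring] at hbound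
  rw [div_le_iff₀ (by positivity)]
  calc a * (1 - u₀ a) ^ (2 * q + 2) ≤ a * ((2 * q + 2) * ((q * a + 1) / a) * T) := by gcongr
    _ = T * (2 * (q * a + 1) * (q + 1)) := by field_simp

/-- Corollary 3.1: lower bound on the quenching time at the right wall. -/
theorem stmt_4 (q a T : ℝ) (hq : 0 < q) (ha : 0 < a) (hT : 0 < T)
    (u₀ : ℝ → ℝ) (hu₀ : 0 ≤ u₀ a ∧ u₀ a < 1)
    (g g' : ℝ → ℝ) (hg0 : g 0 = u₀ a)
    (hderiv : ∀ t ∈ Set.Ico (0:ℝ) T, HasDerivWithinAt g (g' t) (Set.Ico (0:ℝ) T) t)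
    (hrange : ∀ t ∈ Set.Ico (0:ℝ) T, 0 ≤ g t ∧ g t < 1)
    (hlim : Filter.Tendsto g (nhdsWithin T (Set.Iio T)) (nhds 1))
    (hineq : ∀ t ∈ Set.Ico (0:ℝ) T, g' t ≤ ((q * a + 1) / a) * (1 - g t) ^ (-(2 * q) - 1)) :
    a * (1 - u₀ a) ^ (2 * q + 2) / (2 * (q * a + 1) * (q + 1)) ≤ T :=
  stmt_4_general q a T hq ha hT u₀ g g' hg0 hderiv hrange hlim hineq
end

section
/- Let p > 0, a > 0, u₀ : [0, a] → ℝ with u₀(0) > 0, and suppose a differentiable positive function g : [0, T) → ℝ with g(0) = u₀(0), g(t) → 0 as t → T⁻, satisfies g'(t) ≥ -((pa+1)/a) · g(t)^{-2p-1}. Then T ≥ a · u₀(0)^{2p+2} / (2(pa+1)(p+1)). -/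
/-!
With `q = 2p + 2` and `K = (pa + 1)/a`, the hypothesis reads `g' ≥ -K g^(1-q)`, so the energy
`g(t)^q + qKt` has derivative `q g^(q-1) g' + qK ≥ 0` and is nondecreasing on `[0, T)`.
Since `g(t)^q → 0` as `t → T⁻`, its initial value `u₀(0)^q` is at most its limit `qKT`.
-/

open Filter Set Topology

theorem MonotoneOn.le_of_tendsto_nhdsLT_s5 {α β : Type*} [TopologicalSpace α] [LinearOrder α]
    [OrderTopology α] [DenselyOrdered α] [TopologicalSpace β] [Preorder β]
    [OrderClosedTopology β] {f : α → β} {a b : α} {L : β} (hf : MonotoneOn f (Ico a b))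
    (hlim : Tendsto f (𝓝[<] b) (𝓝 L)) {x : α} (hx : x ∈ Ico a b) : f x ≤ L := by
  have : NeBot (𝓝[<] b) := nhdsLT_neBot_of_exists_lt ⟨x, hx.2⟩
  refine ge_of_tendsto hlim ?_
  filter_upwards [Ioo_mem_nhdsLT hx.2] with t ht
  exact hf hx ⟨hx.1.trans ht.1.le, ht.2⟩ ht.1.le

section QuenchingEnergy

variable {g g' : ℝ → ℝ} {q K s T : ℝ}

theorem hasDerivWithinAt_rpow_add_const_mul {S : Set ℝ} {t : ℝ}
    (hg : HasDerivWithinAt g (g' t) S t) (hpos : 0 < g t) :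
    HasDerivWithinAt (fun t => g t ^ q + q * K * t)
      (g' t * q * g t ^ (q - 1) + q * K) S t := by
  have := (hg.rpow_const (p := q) (Or.inl hpos.ne')).add
    ((hasDerivWithinAt_id t S).const_mul (q * K))
  rwa [mul_one] at this

theorem deriv_rpow_add_const_mul_nonneg (hq : 0 ≤ q) {t : ℝ} (hpos : 0 < g t)
    (hineq : -K * g t ^ (1 - q) ≤ g' t) : 0 ≤ g' t * q * g t ^ (q - 1) + q * K := by
  have hcancel : g t ^ (1 - q) * g t ^ (q - 1) = 1 := by
    rw [← Real.rpow_add hpos, show 1 - q + (q - 1) = 0 by ring, Real.rpow_zero]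
  have hscale : -K * g t ^ (1 - q) * (q * g t ^ (q - 1)) ≤ g' t * (q * g t ^ (q - 1)) :=
    mul_le_mul_of_nonneg_right hineq (by positivity)
  calc (0 : ℝ) = -K * g t ^ (1 - q) * (q * g t ^ (q - 1)) + q * K := by
        linear_combination q * K * hcancel
    _ ≤ g' t * q * g t ^ (q - 1) + q * K := by linarith

theorem monotoneOn_rpow_add_const_mul (hq : 0 ≤ q)
    (hderiv : ∀ t ∈ Ico s T, HasDerivWithinAt g (g' t) (Ico s T) t)
    (hpos : ∀ t ∈ Ico s T, 0 < g t)
    (hineq : ∀ t ∈ Ico s T, -K * g t ^ (1 - q) ≤ g' t) :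
    MonotoneOn (fun t => g t ^ q + q * K * t) (Ico s T) := by
  have hφ : ∀ t ∈ Ico s T, HasDerivWithinAt (fun t => g t ^ q + q * K * t)
      (g' t * q * g t ^ (q - 1) + q * K) (Ico s T) t := fun t ht =>
    hasDerivWithinAt_rpow_add_const_mul (hderiv t ht) (hpos t ht)
  refine monotoneOn_of_hasDerivWithinAt_nonneg (convex_Ico s T)
    (f' := fun t => g' t * q * g t ^ (q - 1) + q * K)
    (fun t ht => (hφ t ht).continuousWithinAt) (fun t ht => ?_) (fun t ht => ?_)
  · rw [interior_Ico] at ht ⊢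
    exact (hφ t (Ioo_subset_Ico_self ht)).mono Ioo_subset_Ico_self
  · rw [interior_Ico] at ht
    exact deriv_rpow_add_const_mul_nonneg hq (hpos t (Ioo_subset_Ico_self ht))
      (hineq t (Ioo_subset_Ico_self ht))

theorem rpow_le_mul_sub_of_tendsto_zero (hq : 0 < q) (hsT : s < T)
    (hderiv : ∀ t ∈ Ico s T, HasDerivWithinAt g (g' t) (Ico s T) t)
    (hpos : ∀ t ∈ Ico s T, 0 < g t)
    (hineq : ∀ t ∈ Ico s T, -K * g t ^ (1 - q) ≤ g' t)
    (hlim : Tendsto g (𝓝[<] T) (𝓝 0)) :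
    g s ^ q ≤ q * K * (T - s) := by
  have hlimφ : Tendsto (fun t => g t ^ q + q * K * t) (𝓝[<] T) (𝓝 (0 + q * K * T)) := by
    refine Tendsto.add ?_
      (tendsto_nhdsWithin_of_tendsto_nhds ((continuous_const_mul (q * K)).tendsto T))
    simpa [Function.comp_def, Real.zero_rpow hq.ne'] using
      (Real.continuousAt_rpow_const 0 q (Or.inr hq.le)).tendsto.comp hlim
  have := (monotoneOn_rpow_add_const_mul hq.le hderiv hpos hineq).le_of_tendsto_nhdsLT_s5 hlimφ
    ⟨le_rfl, hsT⟩
  linarith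

end QuenchingEnergy

theorem stmt_5_general (p a T : ℝ) (hp : 0 < p) (ha : 0 < a) (hT : 0 < T)
    (u₀ : ℝ → ℝ)
    (g g' : ℝ → ℝ) (hg0 : g 0 = u₀ 0)
    (hderiv : ∀ t ∈ Set.Ico (0:ℝ) T, HasDerivWithinAt g (g' t) (Set.Ico (0:ℝ) T) t)
    (hpos : ∀ t ∈ Set.Ico (0:ℝ) T, 0 < g t)
    (hlim : Filter.Tendsto g (nhdsWithin T (Set.Iio T)) (nhds 0))
    (hineq : ∀ t ∈ Set.Ico (0:ℝ) T, -((p * a + 1) / a) * (g t) ^ (-(2 * p) - 1) ≤ g' t) :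
    a * (u₀ 0) ^ (2 * p + 2) / (2 * (p * a + 1) * (p + 1)) ≤ T := by
  have hineq' : ∀ t ∈ Ico (0:ℝ) T, -((p * a + 1) / a) * g t ^ (1 - (2 * p + 2)) ≤ g' t := by
    simpa only [show 1 - (2 * p + 2) = -(2 * p) - 1 by ring] using hineq
  have hbound := rpow_le_mul_sub_of_tendsto_zero (by positivity) hT hderiv hpos hineq' hlim
  rw [hg0, sub_zero] at hbound
  rw [div_le_iff₀ (by positivity)]
  calc a * u₀ 0 ^ (2 * p + 2) ≤ a * ((2 * p + 2) * ((p * a + 1) / a) * T) := by gcongr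
    _ = T * (2 * (p * a + 1) * (p + 1)) := by field_simp

/-- Corollary 3.2: lower bound on the quenching time at the left wall. -/
theorem stmt_5 (p a T : ℝ) (hp : 0 < p) (ha : 0 < a) (hT : 0 < T)
    (u₀ : ℝ → ℝ) (hu₀ : 0 < u₀ 0)
    (g g' : ℝ → ℝ) (hg0 : g 0 = u₀ 0)
    (hderiv : ∀ t ∈ Set.Ico (0:ℝ) T, HasDerivWithinAt g (g' t) (Set.Ico (0:ℝ) T) t)
    (hpos : ∀ t ∈ Set.Ico (0:ℝ) T, 0 < g t)
    (hlim : Filter.Tendsto g (nhdsWithin T (Set.Iio T)) (nhds 0))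
    (hineq : ∀ t ∈ Set.Ico (0:ℝ) T, -((p * a + 1) / a) * (g t) ^ (-(2 * p) - 1) ≤ g' t) :
    a * (u₀ 0) ^ (2 * p + 2) / (2 * (p * a + 1) * (p + 1)) ≤ T :=
  stmt_5_general p a T hp ha hT u₀ g g' hg0 hderiv hpos hlim hineq
end

section
/- Let φ : [0,1] → ℝ be continuous and strictly increasing with φ(0) = 0, and let u : [0,a] × [0,T₀) → ℝ be a C¹ solution (in an appropriate sense) of (φ(u))_t = (|u_x|^{r-2} u_x)_x with u_x(0,t) = u(0,t)^{-p}, u_x(a,t) = (1-u(a,t))^{-q}, u ≥ 0, u ≤ 1, and u_t ≤ 0 on (0,a)×(0,T₀). Suppose ω₃ := u(0,0)^{-p(r-1)} - (1-u(a,0))^{-q(r-1)} > 0. Then the mass m₃(t) = ∫₀ᵃ φ(u(x,t)) dx satisfies m₃(t) ≤ m₃(0) - ω₃ t for all t in [0, T₀), and consequently T₀ ≤ m₃(0)/ω₃. -/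
/-!
Since `u_t ≤ 0`, each `φ (u x ·)` is nonincreasing, so `Fx = ∂ₜ φ(u) ≤ 0` and the flux `F` is
nonincreasing in `x`. Hence the mass has derivative
`F(a,t) - F(0,t) = (1 - u(a,t))^{-q(r-1)} - u(0,t)^{-p(r-1)}`, and as `u(0,·)` and `u(a,·)`
decrease this is at most `-ω₃`. Instead of differentiating under the integral sign, Fatou's lemma
applied to the nonnegative difference quotients bounds the upper right Dini derivative of the mass
by `-ω₃`, which gives `m₃(t) ≤ m₃(0) - ω₃ t`; since `m₃ ≥ 0`, `T₀ ≤ m₃(0) / ω₃`.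
-/

open Set Filter MeasureTheory
open scoped Topology

theorem antitoneOn_of_hasDerivWithinAt_nonpos_of_mem_Ioo {u ut : ℝ → ℝ → ℝ} {a b T : ℝ}
    (hab : a ≠ b) (hcont : ∀ t ∈ Ico 0 T, ContinuousOn (fun x => u x t) (Icc a b))
    (hut : ∀ x ∈ Icc a b, ∀ t ∈ Ico 0 T, HasDerivWithinAt (u x) (ut x t) (Ico 0 T) t)
    (hut_nonpos : ∀ x ∈ Ioo a b, ∀ t ∈ Ioo 0 T, ut x t ≤ 0) :
    ∀ x ∈ Icc a b, AntitoneOn (u x) (Ico 0 T) := by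
  have hinterior : ∀ x ∈ Ioo a b, AntitoneOn (u x) (Ico 0 T) := fun x hx =>
    have hx' := Ioo_subset_Icc_self hx
    antitoneOn_of_hasDerivWithinAt_nonpos (convex_Ico 0 T)
      (fun t ht => (hut x hx' t ht).continuousWithinAt)
      (fun t ht => (hut x hx' t (interior_subset ht)).mono interior_subset)
      (fun t ht => hut_nonpos x hx t (by rwa [interior_Ico] at ht))
  intro x hx s hs s' hs' hss'
  rw [← closure_Ioo hab] at hx hcont
  exact le_on_closure (fun y hy => hinterior y hy hs hs' hss') (hcont s' hs') (hcont s hs) hx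

theorem antitoneOn_Icc_of_hasDerivWithinAt_nonpos {f f' : ℝ → ℝ} {a b : ℝ}
    (hf : ∀ x ∈ Icc a b, HasDerivWithinAt f (f' x) (Icc a b) x)
    (hf' : ∀ x ∈ Ioo a b, f' x ≤ 0) : AntitoneOn f (Icc a b) :=
  antitoneOn_of_hasDerivWithinAt_nonpos (convex_Icc a b)
    (fun x hx => (hf x hx).continuousWithinAt)
    (fun x hx => (hf x (interior_subset hx)).mono interior_subset)
    (fun x hx => hf' x (by rwa [interior_Icc] at hx))

theorem abs_rpow_neg_rpow_sub_two_mul_rpow_neg {y p r : ℝ} (hy : 0 ≤ y) (hpr : p * (r - 1) ≠ 0) :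
    |y ^ (-p)| ^ (r - 2) * y ^ (-p) = y ^ (-(p * (r - 1))) := by
  rcases hy.eq_or_lt with rfl | hy
  · have hp : p ≠ 0 := left_ne_zero_of_mul hpr
    simp [Real.zero_rpow (neg_ne_zero.2 hp), Real.zero_rpow (neg_ne_zero.2 hpr)]
  · rw [abs_of_pos (Real.rpow_pos_of_pos hy _), ← Real.rpow_mul hy.le, ← Real.rpow_add hy]
    ring_nf

theorem pos_of_antitoneOn_flux {f f' : ℝ → ℝ} {a p q r : ℝ} (ha : 0 < a) (hp : p ≠ 0)
    (hf : ∀ x ∈ Icc 0 a, HasDerivWithinAt f (f' x) (Icc 0 a) x)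
    (hflux : AntitoneOn (fun x => |f' x| ^ (r - 2) * f' x) (Icc 0 a))
    (hf'0 : f' 0 = f 0 ^ (-p)) (hf'a : f' a = (1 - f a) ^ (-q))
    (hf0 : 0 ≤ f 0) (hfa : 0 ≤ f a) : 0 < f 0 := by
  have h0 : (0 : ℝ) ∈ Icc 0 a := ⟨le_rfl, ha.le⟩
  have ha' : a ∈ Icc 0 a := ⟨ha.le, le_rfl⟩
  refine hf0.lt_of_ne' fun hf0 => ?_
  have hf'0 : f' 0 = 0 := by rw [hf'0, hf0, Real.zero_rpow (neg_ne_zero.2 hp)]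
  have hf'_nonpos : ∀ x ∈ Icc 0 a, f' x ≤ 0 := fun x hx => by
    by_contra! hpos
    have := hflux h0 hx hx.1
    simp only [hf'0, mul_zero] at this
    exact this.not_gt (mul_pos (Real.rpow_pos_of_pos (abs_pos.2 hpos.ne') _) hpos)
  have hf_anti : AntitoneOn f (Icc 0 a) :=
    antitoneOn_Icc_of_hasDerivWithinAt_nonpos hf fun x hx => hf'_nonpos x (Ioo_subset_Icc_self hx)
  have hfa0 : f a = 0 := le_antisymm (hf0 ▸ hf_anti h0 ha' ha.le) hfa
  have := hf'_nonpos a ha'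
  rw [hf'a, hfa0, sub_zero, Real.one_rpow] at this
  exact one_pos.not_ge this

theorem ContinuousOn.le_of_forall_notMem_Ioo {f : ℝ → ℝ} {a b y z : ℝ} (hab : a ≤ b)
    (hf : ContinuousOn f (Icc a b)) (hfa : f a ≤ y) (hyz : y < z)
    (hgap : ∀ x ∈ Icc a b, f x ∉ Ioo y z) : f b ≤ y := by
  by_contra! hfb
  obtain ⟨w, hyw, hw⟩ := exists_between (lt_min hfb hyz)
  obtain ⟨x, hx, hfx⟩ :=
    intermediate_value_Icc hab hf ⟨hfa.trans hyw.le, hw.le.trans (min_le_left _ _)⟩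
  exact hgap x hx (hfx ▸ ⟨hyw, hw.trans_le (min_le_right _ _)⟩)

/-- With the convention `0 ^ (-β) = 0` the case `B 0 = 0` is not vacuous: it forces `B = 0`. -/
theorem rpow_neg_sub_rpow_neg_le {A B : ℝ → ℝ} {T α β : ℝ} (hα : 0 < α) (hβ : 0 < β)
    (hA : AntitoneOn A (Ico 0 T)) (hA_pos : ∀ t ∈ Ico 0 T, 0 < A t)
    (hB : MonotoneOn B (Ico 0 T)) (hB_cont : ContinuousOn B (Ico 0 T))
    (hB_nonneg : ∀ t ∈ Ico 0 T, 0 ≤ B t)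
    (hBA : ∀ t ∈ Ico 0 T, B t ^ (-β) ≤ A t ^ (-α)) :
    ∀ t ∈ Ico 0 T, A 0 ^ (-α) - B 0 ^ (-β) ≤ A t ^ (-α) - B t ^ (-β) := by
  intro t ht
  have h0 : (0 : ℝ) ∈ Ico 0 T := ⟨le_rfl, ht.1.trans_lt ht.2⟩
  have hA_le : A 0 ^ (-α) ≤ A t ^ (-α) :=
    Real.rpow_le_rpow_of_nonpos (hA_pos t ht) (hA h0 ht ht.1) (by linarith)
  suffices B t ^ (-β) ≤ B 0 ^ (-β) by linarith
  rcases (hB_nonneg 0 h0).eq_or_lt with hB0 | hB0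
  · have hIcc : Icc 0 t ⊆ Ico 0 T := Icc_subset_Ico_right ht.2
    -- wherever `B > 0`, `B ^ β ≥ A ^ α ≥ A t ^ α`, so by continuity `B ^ β` cannot leave `0`
    have hgap : ∀ s ∈ Icc 0 t, B s ^ β ∉ Ioo 0 (A t ^ α) := by
      rintro s hs ⟨hpos, hlt⟩
      have hBs : 0 < B s := (hB_nonneg s (hIcc hs)).lt_of_ne' fun h => by
        simp [h, Real.zero_rpow hβ.ne'] at hpos
      have := hBA s (hIcc hs)
      have hAs := hA_pos s (hIcc hs)
      rw [Real.rpow_neg hBs.le, Real.rpow_neg hAs.le,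
        inv_le_inv₀ (Real.rpow_pos_of_pos hBs _) (Real.rpow_pos_of_pos hAs _)] at this
      have := Real.rpow_le_rpow (hA_pos t ht).le (hA (hIcc hs) ht hs.2) hα.le
      linarith
    have hBt : B t ^ β ≤ 0 :=
      ContinuousOn.le_of_forall_notMem_Ioo (f := fun s => B s ^ β) ht.1
        ((hB_cont.mono hIcc).rpow_const fun _ _ => Or.inr hβ.le)
        (by simp [← hB0, Real.zero_rpow hβ.ne']) (Real.rpow_pos_of_pos (hA_pos t ht) α) hgap
    have hBt0 : B t = 0 := by
      by_contra h
      exact hBt.not_gt (Real.rpow_pos_of_pos ((hB_nonneg t ht).lt_of_ne' h) β)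
    rw [hBt0, ← hB0]
  · exact Real.rpow_le_rpow_of_nonpos hB0 (hB h0 ht ht.1) (by linarith)

theorem frequently_slope_integral_lt {α : Type*} [MeasurableSpace α] {μ : Measure α}
    {g : α → ℝ → ℝ} {g' : α → ℝ} {t r : ℝ}
    (hint : ∀ᶠ s in 𝓝[>] t, Integrable (fun x => g x s) μ)
    (hint_t : Integrable (fun x => g x t) μ)
    (hle : ∀ᶠ s in 𝓝[>] t, ∀ᵐ x ∂μ, g x s ≤ g x t)
    (hderiv : ∀ᵐ x ∂μ, HasDerivWithinAt (g x) (g' x) (Ioi t) t)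
    (hint' : Integrable g' μ) (hr : ∫ x, g' x ∂μ < r) :
    ∃ᶠ s in 𝓝[>] t, slope (fun s => ∫ x, g x s ∂μ) t s < r := by
  by_contra h
  rw [not_frequently] at h
  obtain ⟨z, hz, hzP⟩ := exists_seq_forall_of_frequently
    (hint.and (hle.and (h.and self_mem_nhdsWithin))).frequently
  choose hz_int hz_le hz_slope hz_gt using hzP
  -- Fatou's lemma for the nonnegative difference quotients `-slope (g x) t (z n) → -g' x`
  set G : ℕ → α → ℝ := fun n x => -slope (g x) t (z n)
  have hG_nonneg : ∀ n, ∀ᵐ x ∂μ, 0 ≤ G n x := fun n => by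
    filter_upwards [hz_le n] with x hx
    rw [neg_nonneg, slope_def_field]
    exact div_nonpos_of_nonpos_of_nonneg (sub_nonpos.2 hx) (sub_pos.2 (hz_gt n)).le
  have hG_int : ∀ n, Integrable (G n) μ := fun n => by
    simp only [G, slope_def_field]
    exact (((hz_int n).sub hint_t).div_const _).neg
  have hG_integral : ∀ n, ∫ x, G n x ∂μ ≤ -r := fun n => by
    have := hz_slope n
    simp only [G, slope_def_field, integral_neg, integral_div, integral_sub (hz_int n) hint_t]
      at this ⊢
    linarith
  have hG_tendsto : ∀ᵐ x ∂μ, Tendsto (fun n => G n x) atTop (𝓝 (-g' x)) := by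
    filter_upwards [hderiv] with x hx
    exact ((hasDerivWithinAt_iff_tendsto_slope' (lt_irrefl t)).1 hx).comp hz |>.neg
  have hfatou : ENNReal.ofReal (-∫ x, g' x ∂μ) ≤ ENNReal.ofReal (-r) := calc
    ENNReal.ofReal (-∫ x, g' x ∂μ) = ∫⁻ x, ENNReal.ofReal (-g' x) ∂μ := by
      rw [← integral_neg]
      refine ofReal_integral_eq_lintegral_ofReal hint'.neg ?_
      filter_upwards [hG_tendsto, ae_all_iff.2 hG_nonneg] with x hx hx'
      exact ge_of_tendsto' hx hx'
    _ = ∫⁻ x, liminf (fun n => ENNReal.ofReal (G n x)) atTop ∂μ := by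
      refine lintegral_congr_ae ?_
      filter_upwards [hG_tendsto] with x hx
      exact (ENNReal.tendsto_ofReal hx).liminf_eq.symm
    _ ≤ liminf (fun n => ∫⁻ x, ENNReal.ofReal (G n x) ∂μ) atTop :=
      lintegral_liminf_le' fun n => (hG_int n).aemeasurable.ennreal_ofReal
    _ ≤ ENNReal.ofReal (-r) := by
      refine liminf_le_of_frequently_le' (Frequently.of_forall fun n => ?_)
      rw [← ofReal_integral_eq_lintegral_ofReal (hG_int n) (hG_nonneg n)]
      exact ENNReal.ofReal_le_ofReal (hG_integral n)
  rcases ENNReal.ofReal_le_ofReal_iff'.1 hfatou with h' | h'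
  · linarith
  · linarith [hG_integral 0, integral_nonneg_of_ae (hG_nonneg 0)]

theorem integral_le_sub_mul_of_integral_deriv_le {α : Type*} [MeasurableSpace α]
    {μ : Measure α} [IsFiniteMeasure μ] {g g' : α → ℝ → ℝ} {T ω K : ℝ}
    (hmeas : ∀ t ∈ Ico 0 T, AEStronglyMeasurable (fun x => g x t) μ)
    (hbound : ∀ t ∈ Ico 0 T, ∀ᵐ x ∂μ, ‖g x t‖ ≤ K)
    (hderiv : ∀ᵐ x ∂μ, ∀ t ∈ Ico 0 T, HasDerivWithinAt (g x) (g' x t) (Ico 0 T) t)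
    (hanti : ∀ᵐ x ∂μ, AntitoneOn (g x) (Ico 0 T))
    (hint' : ∀ t ∈ Ico 0 T, Integrable (fun x => g' x t) μ)
    (hflux : ∀ t ∈ Ico 0 T, ∫ x, g' x t ∂μ ≤ -ω) :
    ∀ t ∈ Ico 0 T, ∫ x, g x t ∂μ ≤ ∫ x, g x 0 ∂μ - ω * t := by
  have hint : ∀ t ∈ Ico 0 T, Integrable (fun x => g x t) μ := fun t ht =>
    .of_bound (hmeas t ht) K (hbound t ht)
  intro b hb
  have hIcc : Icc 0 b ⊆ Ico 0 T := Icc_subset_Ico_right hb.2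
  have hcont : ContinuousOn (fun t => ∫ x, g x t ∂μ) (Icc 0 b) := by
    refine continuousOn_of_dominated (fun t ht => hmeas t (hIcc ht))
      (fun t ht => hbound t (hIcc ht)) (integrable_const K) ?_
    filter_upwards [hderiv] with x hx
    exact fun t ht => (hx t (hIcc ht)).continuousWithinAt.mono hIcc
  refine image_le_of_liminf_slope_right_le_deriv_boundary
    (B := fun s => ∫ x, g x 0 ∂μ - ω * s) (B' := fun _ => -ω) hcont (by simp)
    (by fun_prop) (fun t _ => ?_) (fun t ht r hr => ?_) (right_mem_Icc.2 hb.1)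
  · simpa using ((hasDerivWithinAt_id t _).const_mul ω).const_sub _
  have htT : t ∈ Ico 0 T := ⟨ht.1, ht.2.trans hb.2⟩
  have hnhds : ∀ᶠ s in 𝓝[>] t, s ∈ Ioo t T := Ioo_mem_nhdsGT htT.2
  refine frequently_slope_integral_lt (g' := fun x => g' x t)
    (hnhds.mono fun s hs => hint s ⟨htT.1.trans hs.1.le, hs.2⟩) (hint t htT) ?_ ?_
    (hint' t htT) ((hflux t htT).trans_lt hr)
  · filter_upwards [hnhds] with s hs
    filter_upwards [hanti] with x hx
    exact hx htT ⟨htT.1.trans hs.1.le, hs.2⟩ hs.1.le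
  · filter_upwards [hderiv] with x hx
    exact (hx t htT).mono_of_mem_nhdsWithin (mem_of_superset (Ioo_mem_nhdsGT htT.2)
      fun s hs => ⟨htT.1.trans hs.1.le, hs.2⟩)

theorem integrableOn_and_integral_eq_sub_of_deriv_nonpos {f f' : ℝ → ℝ} {a b : ℝ}
    (hab : a ≤ b)
    (hf : ∀ x ∈ Icc a b, HasDerivWithinAt f (f' x) (Icc a b) x)
    (hf' : ∀ x ∈ Ioo a b, f' x ≤ 0) :
    IntegrableOn f' (Ioc a b) ∧ ∫ x in Ioc a b, f' x = f b - f a := by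
  have hcont : ContinuousOn f (Icc a b) := fun x hx => (hf x hx).continuousWithinAt
  have hderiv : ∀ x ∈ Ioo a b, HasDerivAt f (f' x) x := fun x hx =>
    (hf x (Ioo_subset_Icc_self hx)).hasDerivAt (Icc_mem_nhds hx.1 hx.2)
  have hint : IntegrableOn f' (Ioc a b) := by
    simpa using (intervalIntegral.integrableOn_deriv_of_nonneg hcont.neg
      (fun x hx => (hderiv x hx).neg) fun x hx => neg_nonneg.2 (hf' x hx)).neg
  refine ⟨hint, ?_⟩
  rw [← intervalIntegral.integral_of_le hab]
  exact intervalIntegral.integral_eq_sub_of_hasDerivAt_of_le hab hcont hderiv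
    ((intervalIntegrable_iff_integrableOn_Ioc_of_le hab).2 hint)

theorem boundary_flux_sub_le {u ux : ℝ → ℝ → ℝ} {a T p q r : ℝ} (ha : 0 < a) (hp : 0 < p)
    (hq : 0 < q) (hr : 1 < r)
    (hux : ∀ t ∈ Ico 0 T, ∀ x ∈ Icc 0 a,
      HasDerivWithinAt (fun y => u y t) (ux x t) (Icc 0 a) x)
    (hflux : ∀ t ∈ Ico 0 T, AntitoneOn (fun x => |ux x t| ^ (r - 2) * ux x t) (Icc 0 a))
    (hbc0 : ∀ t ∈ Ico 0 T, ux 0 t = u 0 t ^ (-p))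
    (hbca : ∀ t ∈ Ico 0 T, ux a t = (1 - u a t) ^ (-q))
    (hrange : ∀ x ∈ Icc 0 a, ∀ t ∈ Ico 0 T, 0 ≤ u x t ∧ u x t ≤ 1)
    (hanti0 : AntitoneOn (u 0) (Ico 0 T)) (hantia : AntitoneOn (u a) (Ico 0 T))
    (hconta : ContinuousOn (u a) (Ico 0 T)) :
    ∀ t ∈ Ico 0 T, |ux a t| ^ (r - 2) * ux a t - |ux 0 t| ^ (r - 2) * ux 0 t ≤
      -(u 0 0 ^ (-(p * (r - 1))) - (1 - u a 0) ^ (-(q * (r - 1)))) := by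
  have hr1 : 0 < r - 1 := by linarith
  have h0 : (0:ℝ) ∈ Icc 0 a := ⟨le_rfl, ha.le⟩
  have ha' : a ∈ Icc 0 a := ⟨ha.le, le_rfl⟩
  have hF0 : ∀ t ∈ Ico 0 T, |ux 0 t| ^ (r - 2) * ux 0 t = u 0 t ^ (-(p * (r - 1))) :=
    fun t ht => by
      rw [hbc0 t ht,
        abs_rpow_neg_rpow_sub_two_mul_rpow_neg (hrange 0 h0 t ht).1 (by positivity)]
  have hFa : ∀ t ∈ Ico 0 T, |ux a t| ^ (r - 2) * ux a t = (1 - u a t) ^ (-(q * (r - 1))) :=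
    fun t ht => by
      rw [hbca t ht, abs_rpow_neg_rpow_sub_two_mul_rpow_neg
        (sub_nonneg.2 (hrange a ha' t ht).2) (by positivity)]
  have hu0 : ∀ t ∈ Ico 0 T, 0 < u 0 t := fun t ht =>
    pos_of_antitoneOn_flux ha hp.ne' (hux t ht) (hflux t ht) (hbc0 t ht) (hbca t ht)
      (hrange 0 h0 t ht).1 (hrange a ha' t ht).1
  intro t ht
  have := rpow_neg_sub_rpow_neg_le (A := u 0) (B := fun s => 1 - u a s)
    (mul_pos hp hr1) (mul_pos hq hr1) hanti0 hu0
    (fun s hs s' hs' hss' => sub_le_sub_left (hantia hs hs' hss') 1)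
    (continuousOn_const.sub hconta)
    (fun s hs => sub_nonneg.2 (hrange a ha' s hs).2)
    (fun s hs => hFa s hs ▸ hF0 s hs ▸ hflux s hs h0 ha' ha.le) t ht
  rw [hFa t ht, hF0 t ht]
  linarith

theorem le_div_of_forall_le_sub_mul {m : ℝ → ℝ} {T ω : ℝ} (hT : 0 < T) (hω : 0 < ω)
    (hm : ∀ t ∈ Ico 0 T, 0 ≤ m t) (hdecay : ∀ t ∈ Ico 0 T, m t ≤ m 0 - ω * t) :
    T ≤ m 0 / ω := by
  refine le_of_forall_lt_imp_le_of_dense fun t ht => ?_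
  rcases lt_or_ge t 0 with ht0 | ht0
  · exact ht0.le.trans (div_nonneg (hm 0 ⟨le_rfl, hT⟩) hω.le)
  · rw [le_div_iff₀ hω]
    linarith [hm t ⟨ht0, ht⟩, hdecay t ⟨ht0, ht⟩]

/-- Theorem 2.1(a), mass-function argument: finite-time quenching. -/
theorem stmt_6 (a T₀ r p q : ℝ) (ha : 0 < a) (hT₀ : 0 < T₀) (hr : 2 ≤ r)
    (hp : 0 < p) (hq : 0 < q)
    (φ : ℝ → ℝ) (hφc : ContinuousOn φ (Set.Icc 0 1))
    (hφmono : StrictMonoOn φ (Set.Icc 0 1)) (hφ0 : φ 0 = 0)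
    (u ux ut F Fx : ℝ → ℝ → ℝ)
    (hux : ∀ t ∈ Set.Ico (0:ℝ) T₀, ∀ x ∈ Set.Icc 0 a,
      HasDerivWithinAt (fun y => u y t) (ux x t) (Set.Icc 0 a) x)
    (hut : ∀ x ∈ Set.Icc (0:ℝ) a, ∀ t ∈ Set.Ico (0:ℝ) T₀,
      HasDerivWithinAt (fun s => u x s) (ut x t) (Set.Ico (0:ℝ) T₀) t)
    (hF : ∀ x t, F x t = |ux x t| ^ (r - 2) * ux x t)
    (hFx : ∀ t ∈ Set.Ico (0:ℝ) T₀, ∀ x ∈ Set.Icc 0 a,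
      HasDerivWithinAt (fun y => F y t) (Fx x t) (Set.Icc 0 a) x)
    (hpde : ∀ x ∈ Set.Icc (0:ℝ) a, ∀ t ∈ Set.Ico (0:ℝ) T₀,
      HasDerivWithinAt (fun s => φ (u x s)) (Fx x t) (Set.Ico (0:ℝ) T₀) t)
    (hbc0 : ∀ t ∈ Set.Ico (0:ℝ) T₀, ux 0 t = (u 0 t) ^ (-p))
    (hbca : ∀ t ∈ Set.Ico (0:ℝ) T₀, ux a t = (1 - u a t) ^ (-q))
    (hrange : ∀ x ∈ Set.Icc (0:ℝ) a, ∀ t ∈ Set.Ico (0:ℝ) T₀, 0 ≤ u x t ∧ u x t ≤ 1)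
    (hutneg : ∀ x ∈ Set.Ioo (0:ℝ) a, ∀ t ∈ Set.Ioo (0:ℝ) T₀, ut x t ≤ 0)
    (hω : 0 < (u 0 0) ^ (-(p * (r - 1))) - (1 - u a 0) ^ (-(q * (r - 1)))) :
    (∀ t ∈ Set.Ico (0:ℝ) T₀,
      (∫ x in (0:ℝ)..a, φ (u x t)) ≤ (∫ x in (0:ℝ)..a, φ (u x 0)) -
        ((u 0 0) ^ (-(p * (r - 1))) - (1 - u a 0) ^ (-(q * (r - 1)))) * t) ∧
    T₀ ≤ (∫ x in (0:ℝ)..a, φ (u x 0)) /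
        ((u 0 0) ^ (-(p * (r - 1))) - (1 - u a 0) ^ (-(q * (r - 1)))) := by
  obtain rfl : F = fun x t => |ux x t| ^ (r - 2) * ux x t := funext₂ hF
  have h0 : (0:ℝ) ∈ Icc 0 a := ⟨le_rfl, ha.le⟩
  have ha' : a ∈ Icc 0 a := ⟨ha.le, le_rfl⟩
  have hanti := antitoneOn_of_hasDerivWithinAt_nonpos_of_mem_Ioo ha.ne
    (fun t ht x hx => (hux t ht x hx).continuousWithinAt) hut hutneg
  have hφu : ∀ x ∈ Icc 0 a, ∀ t ∈ Ico 0 T₀, 0 ≤ φ (u x t) ∧ φ (u x t) ≤ φ 1 :=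
    fun x hx t ht =>
      ⟨hφ0 ▸ hφmono.monotoneOn ⟨le_rfl, zero_le_one⟩ (hrange x hx t ht) (hrange x hx t ht).1,
        hφmono.monotoneOn (hrange x hx t ht) ⟨zero_le_one, le_rfl⟩ (hrange x hx t ht).2⟩
  have hφanti : ∀ x ∈ Icc 0 a, AntitoneOn (fun s => φ (u x s)) (Ico 0 T₀) :=
    fun x hx s hs s' hs' hss' =>
      hφmono.monotoneOn (hrange x hx s' hs') (hrange x hx s hs) (hanti x hx hs hs' hss')
  have hFx_nonpos : ∀ t ∈ Ico 0 T₀, ∀ x ∈ Ioo 0 a, Fx x t ≤ 0 := fun t ht x hx =>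
    have hx := Ioo_subset_Icc_self hx
    (hpde x hx t ht).nonpos_of_antitoneOn
      (uniqueDiffWithinAt_iff_accPt.1 (uniqueDiffOn_Ico 0 T₀ t ht)) (hφanti x hx)
  have hflux := boundary_flux_sub_le ha hp hq (by linarith : (1:ℝ) < r) hux
    (fun t ht => antitoneOn_Icc_of_hasDerivWithinAt_nonpos (hFx t ht) (hFx_nonpos t ht))
    hbc0 hbca hrange (hanti 0 h0) (hanti a ha') fun t ht => (hut a ha' t ht).continuousWithinAt
  have hFTC := fun t ht =>
    integrableOn_and_integral_eq_sub_of_deriv_nonpos ha.le (hFx t ht) (hFx_nonpos t ht)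
  have hae {P : ℝ → Prop} (h : ∀ x ∈ Icc 0 a, P x) : ∀ᵐ x ∂volume.restrict (Ioc 0 a), P x :=
    ae_restrict_of_forall_mem measurableSet_Ioc fun x hx => h x (Ioc_subset_Icc_self hx)
  have hmass := integral_le_sub_mul_of_integral_deriv_le (μ := volume.restrict (Ioc 0 a))
    (g := fun x t => φ (u x t)) (K := φ 1)
    (fun t ht => ((hφc.comp (fun x hx => (hux t ht x hx).continuousWithinAt)
      fun x hx => hrange x hx t ht).mono Ioc_subset_Icc_self).aestronglyMeasurable
        measurableSet_Ioc)
    (fun t ht => hae fun x hx => abs_le.2 ⟨by linarith [hφu x hx t ht], (hφu x hx t ht).2⟩)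
    (hae hpde) (hae hφanti) (fun t ht => (hFTC t ht).1)
    (fun t ht => (hFTC t ht).2 ▸ hflux t ht)
  simp only [intervalIntegral.integral_of_le ha.le]
  refine ⟨hmass, le_div_of_forall_le_sub_mul hT₀ hω (fun t ht => ?_) hmass⟩
  exact setIntegral_nonneg measurableSet_Ioc fun x hx => (hφu x (Ioc_subset_Icc_self hx) t ht).1
end
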